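/- arXiv:2303.14582 — 3 statements merged into one kernel-verified Lean document; each statement's English description precedes it below -/
import Mathlib

section
/- Let k ≥ 2 and 1 ≤ α ≤ k−1 be integers, C > 0, and let f : U → [0, C], where U is the collection of all size-α subsets of {1,…,k}. Let 𝐈 ∈ {0,1}^{|U|×k} be the matrix whose rows are the characteristic vectors 1_T for T ∈ U. Then 𝐈ᵀ𝐈 is invertible and the population least-squares coefficient vector θ* = (𝐈ᵀ𝐈)^{-1} 𝐈ᵀ f satisfies ‖θ*‖ ≤ C √k (k−1) / (k−α). -/
open Finset Matrix

/-- The Euclidean norm of a vector. -/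
noncomputable def euclNorm {ι : Type*} [Fintype ι] (v : ι → ℝ) : ℝ :=
  Real.sqrt (∑ i, v i ^ 2)

/-- The matrix `𝐈 ∈ {0,1}^{|U|×k}` whose rows are the characteristic vectors `1_T` of the
size-`α` subsets `T` of `{1,…,k}`. -/
def bigI (k α : ℕ) : Matrix {S : Finset (Fin k) // S.card = α} (Fin k) ℝ :=
  Matrix.of fun S j => if j ∈ S.1 then 1 else 0

/-!
Every coordinate lies in exactly `d = C(k-1, α-1)` of the sets and, by double counting, every pair
of distinct coordinates in `c = (α-1)d/(k-1)` of them, so `𝐈ᵀ𝐈` has `d` on the diagonal and `c`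
off it. Such a matrix is inverted explicitly:
`θᵢ = (wᵢ - c/(d + (k-1)c) · ∑ w) / (d - c)`.
For `w = 𝐈ᵀf` both `wᵢ` and the subtracted term lie in `[0, Cd]` (the latter because
`∑ w ≤ kCd` and `kc ≤ d + (k-1)c`), so `|θᵢ| ≤ Cd/(d - c) = C(k-1)/(k-α)` for every `i`.
-/

theorem euclNorm_le_sqrt_card_mul {ι : Type*} [Fintype ι] {v : ι → ℝ} {M : ℝ}
    (hv : ∀ i, |v i| ≤ M) : euclNorm v ≤ Real.sqrt (Fintype.card ι) * M := by
  rcases isEmpty_or_nonempty ι with hι | ⟨⟨i₀⟩⟩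
  · simp [euclNorm]
  have hM : 0 ≤ M := (abs_nonneg _).trans (hv i₀)
  have hsum : ∑ i, v i ^ 2 ≤ Fintype.card ι * M ^ 2 := by
    calc ∑ i, v i ^ 2 ≤ ∑ _i : ι, M ^ 2 :=
          sum_le_sum fun i _ => sq_le_sq' (abs_le.mp (hv i)).1 (abs_le.mp (hv i)).2
      _ = Fintype.card ι * M ^ 2 := by simp
  calc euclNorm v ≤ Real.sqrt (Fintype.card ι * M ^ 2) := Real.sqrt_le_sqrt hsum
    _ = Real.sqrt (Fintype.card ι) * M := by
      rw [Real.sqrt_mul (Nat.cast_nonneg _), Real.sqrt_sq hM]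

-- Stated times `#t - 1` so that it also holds for `n ≤ 1`, where `(#t - 2).choose (n - 2)` is junk.
theorem card_filter_powersetCard_pair_mul {β : Type*} [DecidableEq β] {t : Finset β} {i j : β}
    (hi : i ∈ t) (hj : j ∈ t) (hij : i ≠ j) (n : ℕ) :
    (#t - 1) * #{S ∈ t.powersetCard n | {i, j} ⊆ S} = (n - 1) * (#t - 1).choose (n - 1) := by
  have hpair : #({i, j} : Finset β) = 2 := card_pair hij
  obtain hn | hn := le_or_gt n 1
  · rw [filter_false_of_mem fun S hS hsub => by
      have := card_le_card hsub
      rw [hpair, (mem_powersetCard.mp hS).2] at this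
      omega]
    simp [Nat.sub_eq_zero_of_le hn]
  · obtain ⟨m, rfl⟩ : ∃ m, n = m + 2 := ⟨n - 2, by omega⟩
    have ht : 2 ≤ #t := hpair ▸ card_le_card (insert_subset hi (singleton_subset_iff.mpr hj))
    rw [card_filter_powersetCard_subset _ _ _ (insert_subset hi (singleton_subset_iff.mpr hj))
      (by omega), hpair, show #t - 1 = (#t - 2) + 1 by omega, Nat.add_one_mul_choose_eq,
      show m + 2 - 2 = m by omega, show m + 2 - 1 = m + 1 by omega, mul_comm]

section CompoundSymmetric

variable {ι : Type*} [Fintype ι] [DecidableEq ι]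

def compoundSymmetric (a b : ℝ) : Matrix ι ι ℝ :=
  of fun i j => if i = j then a else b

theorem compoundSymmetric_mulVec_apply (a b : ℝ) (v : ι → ℝ) (i : ι) :
    (compoundSymmetric a b *ᵥ v) i = (a - b) * v i + b * ∑ j, v j := by
  have hsplit : ∀ j,
      (if i = j then a else b) * v j = b * v j + if i = j then (a - b) * v j else 0 :=
    fun j => by split_ifs <;> ring
  simp only [compoundSymmetric, mulVec, dotProduct, of_apply, hsplit, sum_add_distrib,
    sum_ite_eq, mem_univ, if_true, mul_sum]
  ring

theorem compoundSymmetric_mulVec_solution {a b : ℝ} (hab : a ≠ b)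
    (hD : a + (Fintype.card ι - 1) * b ≠ 0) (w : ι → ℝ) :
    compoundSymmetric a b *ᵥ
      (fun i => (w i - b / (a + (Fintype.card ι - 1) * b) * ∑ j, w j) / (a - b)) = w := by
  have hab' : a - b ≠ 0 := sub_ne_zero.mpr hab
  funext i
  rw [compoundSymmetric_mulVec_apply, ← sum_div, sum_sub_distrib, sum_const, card_univ,
    nsmul_eq_mul]
  set D := a + (Fintype.card ι - 1) * b with hD_def
  field_simp
  rw [hD_def]
  ring

theorem isUnit_compoundSymmetric {a b : ℝ} (hab : a ≠ b)
    (hD : a + (Fintype.card ι - 1) * b ≠ 0) : IsUnit (compoundSymmetric (ι := ι) a b) :=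
  mulVec_surjective_iff_isUnit.mp fun w => ⟨_, compoundSymmetric_mulVec_solution hab hD w⟩

theorem compoundSymmetric_inv_mulVec {a b : ℝ} (hab : a ≠ b)
    (hD : a + (Fintype.card ι - 1) * b ≠ 0) (w : ι → ℝ) :
    (compoundSymmetric a b)⁻¹ *ᵥ w =
      fun i => (w i - b / (a + (Fintype.card ι - 1) * b) * ∑ j, w j) / (a - b) := by
  have := (isUnit_compoundSymmetric (ι := ι) hab hD).invertible
  exact inv_mulVec_eq_vec (compoundSymmetric_mulVec_solution hab hD w).symm

theorem abs_compoundSymmetric_inv_mulVec_le {a b B : ℝ} (hba : b < a) (hb : 0 ≤ b)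
    {w : ι → ℝ} (hw₀ : ∀ i, 0 ≤ w i) (hwB : ∀ i, w i ≤ B) (i : ι) :
    |((compoundSymmetric a b)⁻¹ *ᵥ w) i| ≤ B / (a - b) := by
  set n : ℝ := (Fintype.card ι : ℝ)
  have hD : 0 < a + (n - 1) * b := by nlinarith [(Nat.cast_nonneg _ : (0 : ℝ) ≤ n)]
  have hB : 0 ≤ B := (hw₀ i).trans (hwB i)
  have hsum : ∑ j, w j ≤ n * B := by simpa using sum_le_card_nsmul univ w B fun j _ => hwB j
  have hmean : b / (a + (n - 1) * b) * ∑ j, w j ≤ B := by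
    rw [div_mul_eq_mul_div, div_le_iff₀ hD]
    nlinarith [mul_le_mul_of_nonneg_left hsum hb]
  rw [compoundSymmetric_inv_mulVec hba.ne' hD.ne', abs_div, abs_of_pos (sub_pos.mpr hba)]
  gcongr
  exact abs_sub_le_of_nonneg_of_le (hw₀ i) (hwB i)
    (mul_nonneg (div_nonneg hb hD.le) (sum_nonneg fun j _ => hw₀ j)) hmean

end CompoundSymmetric

section Incidence

variable {k α : ℕ}

theorem card_filter_subtype_eq_card_filter_powersetCard (p : Finset (Fin k) → Prop)
    [DecidablePred p] :
    #{S : {S : Finset (Fin k) // S.card = α} | p S.1} = #{S ∈ powersetCard α univ | p S} := by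
  simp only [card_filter]
  exact (sum_subtype _ (fun S => mem_powersetCard_univ) fun S => if p S then 1 else 0).symm

theorem card_filter_subtype_mem (hα : 1 ≤ α) (i : Fin k) :
    #{S : {S : Finset (Fin k) // S.card = α} | i ∈ S.1} = (k - 1).choose (α - 1) := by
  have h := card_filter_powersetCard_subset {i} univ α (subset_univ _) (by simpa using hα)
  rw [← card_filter_subtype_eq_card_filter_powersetCard] at h
  simpa using h

theorem bigI_transpose_mul_self_apply (i j : Fin k) :
    ((bigI k α)ᵀ * bigI k α) i j = #{S : {S : Finset (Fin k) // S.card = α} | {i, j} ⊆ S.1} := by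
  simp [mul_apply, bigI, ← ite_and, insert_subset_iff, and_comm]

theorem bigI_transpose_mul_self (hα : 1 ≤ α) :
    (bigI k α)ᵀ * bigI k α =
      compoundSymmetric ((k - 1).choose (α - 1))
        (((α : ℝ) - 1) * (k - 1).choose (α - 1) / ((k : ℝ) - 1)) := by
  ext i j
  rw [bigI_transpose_mul_self_apply, compoundSymmetric, of_apply]
  split_ifs with hij
  · subst hij
    simpa using congrArg (Nat.cast (R := ℝ)) (card_filter_subtype_mem hα i)
  · have hk : 2 ≤ k := by
      have := Fin.val_ne_of_ne hij
      omega
    have key := congrArg (Nat.cast (R := ℝ))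
      (card_filter_powersetCard_pair_mul (mem_univ i) (mem_univ j) hij α)
    rw [← card_filter_subtype_eq_card_filter_powersetCard, card_univ, Fintype.card_fin] at key
    push_cast [show 1 ≤ k by omega, hα] at key
    rw [eq_div_iff (sub_ne_zero.mpr (by exact_mod_cast (by omega : k ≠ 1)))]
    linarith

theorem bigI_transpose_mulVec_apply (f : {S : Finset (Fin k) // S.card = α} → ℝ) (i : Fin k) :
    ((bigI k α)ᵀ *ᵥ f) i = ∑ S with i ∈ S.1, f S := by
  simp [mulVec, dotProduct, bigI, sum_filter]

theorem bigI_transpose_mulVec_nonneg {f : {S : Finset (Fin k) // S.card = α} → ℝ}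
    (hf : ∀ T, 0 ≤ f T) (i : Fin k) : 0 ≤ ((bigI k α)ᵀ *ᵥ f) i := by
  rw [bigI_transpose_mulVec_apply]
  exact sum_nonneg fun T _ => hf T

theorem bigI_transpose_mulVec_le (hα : 1 ≤ α) {C : ℝ}
    {f : {S : Finset (Fin k) // S.card = α} → ℝ} (hf : ∀ T, f T ≤ C) (i : Fin k) :
    ((bigI k α)ᵀ *ᵥ f) i ≤ C * (k - 1).choose (α - 1) := by
  rw [bigI_transpose_mulVec_apply]
  calc ∑ S with i ∈ S.1, f S ≤ #{S : {S : Finset (Fin k) // S.card = α} | i ∈ S.1} • C :=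
        sum_le_card_nsmul _ _ _ fun T _ => hf T
    _ = C * (k - 1).choose (α - 1) := by rw [card_filter_subtype_mem hα, nsmul_eq_mul, mul_comm]

end Incidence

theorem stmt_8_general (k α : ℕ) (hα1 : 1 ≤ α) (hαk : α ≤ k - 1)
    (C : ℝ)
    (f : {S : Finset (Fin k) // S.card = α} → ℝ)
    (hf : ∀ T, f T ∈ Set.Icc (0 : ℝ) C) :
    IsUnit ((bigI k α)ᵀ * bigI k α) ∧
    euclNorm (((bigI k α)ᵀ * bigI k α)⁻¹ *ᵥ ((bigI k α)ᵀ *ᵥ f)) ≤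
      C * Real.sqrt k * ((k : ℝ) - 1) / ((k : ℝ) - (α : ℝ)) := by
  rw [bigI_transpose_mul_self hα1]
  set d : ℝ := ↑((k - 1).choose (α - 1))
  have hd : 0 < d := by simp only [d]; exact_mod_cast Nat.choose_pos (by omega)
  have hk : (α : ℝ) + 1 ≤ k := by exact_mod_cast (by omega : α + 1 ≤ k)
  have hα : (1 : ℝ) ≤ α := by exact_mod_cast hα1
  have hk1 : (k : ℝ) - 1 ≠ 0 := by linarith
  have hgap : d - (α - 1) * d / (k - 1) = (k - α) * d / (k - 1) := by
    field_simp
    ring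
  have hoff : 0 ≤ (α - 1) * d / (k - 1) := by
    apply div_nonneg (mul_nonneg _ hd.le) <;> linarith
  have hdiag : (α - 1) * d / (k - 1) < d := by
    rw [← sub_pos, hgap]
    apply div_pos (mul_pos _ hd) <;> linarith
  have hrow : 0 < d + (Fintype.card (Fin k) - 1) * ((α - 1) * d / (k - 1)) := by
    rw [Fintype.card_fin, mul_div_cancel₀ _ hk1]
    nlinarith
  refine ⟨isUnit_compoundSymmetric hdiag.ne' hrow.ne', ?_⟩
  have hθ := abs_compoundSymmetric_inv_mulVec_le hdiag hoff (B := C * d)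
    (bigI_transpose_mulVec_nonneg fun T => (hf T).1)
    (bigI_transpose_mulVec_le hα1 fun T => (hf T).2)
  refine (euclNorm_le_sqrt_card_mul hθ).trans_eq ?_
  rw [Fintype.card_fin, hgap]
  field_simp

theorem stmt_8 (k α : ℕ) (hk : 2 ≤ k) (hα1 : 1 ≤ α) (hαk : α ≤ k - 1)
    (C : ℝ) (hC : 0 < C)
    (f : {S : Finset (Fin k) // S.card = α} → ℝ)
    (hf : ∀ T, f T ∈ Set.Icc (0 : ℝ) C) :
    IsUnit ((bigI k α)ᵀ * bigI k α) ∧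
    euclNorm (((bigI k α)ᵀ * bigI k α)⁻¹ *ᵥ ((bigI k α)ᵀ *ᵥ f)) ≤
      C * Real.sqrt k * ((k : ℝ) - 1) / ((k : ℝ) - (α : ℝ)) :=
  stmt_8_general k α hα1 hαk C f hf
end

section
/- (Deterministic core of Lemma 2 of the paper.) Let k ≥ 2 and 1 ≤ α ≤ k/2 be integers, let U be the collection of all size-α subsets of {1,…,k}, and let 𝐈 ∈ {0,1}^{|U|×k} be the matrix whose rows are the characteristic vectors 1_T for T ∈ U. Let f, g : U → ℝ satisfy |f(T) − g(T)| ≤ ε for every T ∈ U. Then the population least-squares coefficients satisfy ‖ (𝐈ᵀ𝐈)^{-1} 𝐈ᵀ f − (𝐈ᵀ𝐈)^{-1} 𝐈ᵀ g ‖ ≤ ε √(2k/α). -/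
open Finset Matrix

/-- The population least-squares coefficients `θ̄ = (𝐈ᵀ𝐈)⁻¹ 𝐈ᵀ f`. -/
noncomputable def thetaBar (k α : ℕ) (f : {S : Finset (Fin k) // S.card = α} → ℝ) :
    Fin k → ℝ :=
  ((bigI k α)ᵀ * bigI k α)⁻¹ *ᵥ ((bigI k α)ᵀ *ᵥ f)

/-!
The coefficients `θ = (𝐈ᵀ𝐈)⁻¹𝐈ᵀd` of `d = f - g` satisfy the normal equations, so `𝐈θ` is the
orthogonal projection of `d` onto the range of `𝐈` and `‖𝐈θ‖ ≤ ‖d‖ ≤ ε √C(k, α)`. Counting the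
`α`-sets through one or two coordinates shows
`𝐈ᵀ𝐈 = C(k-2, α-1) · 1 + (C(k-1, α-1) - C(k-2, α-1)) · J` with `J` the all-ones matrix, so
`‖𝐈θ‖² ≥ C(k-2, α-1) ‖θ‖²`. Finally `α C(k, α) ≤ 2k C(k-2, α-1)` when `2α ≤ k`, by Pascal's rule
and unimodality of binomial coefficients.
-/

theorem sum_sq_sum_eq_sum_sum_card_filter_mul {ι R : Type*} [Fintype ι] [DecidableEq ι]
    [CommSemiring R] (𝒯 : Finset (Finset ι)) (x : ι → R) :
    ∑ T ∈ 𝒯, (∑ i ∈ T, x i) ^ 2 = ∑ i, ∑ j, (#{T ∈ 𝒯 | i ∈ T ∧ j ∈ T} : R) * (x i * x j) := by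
  simp_rw [card_filter, Nat.cast_sum, sum_mul, Nat.cast_ite, ite_and, Nat.cast_one, Nat.cast_zero,
    ite_mul, one_mul, zero_mul, sum_comm (s := (univ : Finset ι)) (t := 𝒯), sum_ite_irrel,
    sum_const_zero, sum_ite_mem_eq, sq, sum_mul_sum]

section PowersetCard

variable {ι : Type*} [Fintype ι] [DecidableEq ι] (n : ℕ)

theorem card_filter_mem_powersetCard_univ (i : ι) :
    #{T ∈ powersetCard (n + 1) (univ : Finset ι) | i ∈ T} = (Fintype.card ι - 1).choose n := by
  simpa [singleton_subset_iff] using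
    card_filter_powersetCard_subset {i} univ (n + 1) (subset_univ _) (by simp)

theorem card_filter_mem_and_notMem_powersetCard_univ {i j : ι} (hij : i ≠ j) :
    #{T ∈ powersetCard (n + 1) (univ : Finset ι) | i ∈ T ∧ j ∉ T} =
      (Fintype.card ι - 2).choose n := by
  have h := card_filter_powersetCard_subset {i} (univ.erase j) (n + 1) (by simpa using hij)
    (by simp)
  rw [card_erase_of_mem (mem_univ j), card_univ, card_singleton, Nat.sub_sub,
    add_tsub_cancel_right] at h
  rw [← h]
  congr 1
  ext T
  simp only [mem_filter, mem_powersetCard, subset_univ, true_and, subset_erase,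
    singleton_subset_iff]
  tauto

theorem card_filter_mem_and_mem_powersetCard_univ_add (i j : ι) :
    #{T ∈ powersetCard (n + 1) (univ : Finset ι) | i ∈ T ∧ j ∈ T} +
        (if i = j then 0 else (Fintype.card ι - 2).choose n) =
      (Fintype.card ι - 1).choose n := by
  rw [← card_filter_mem_powersetCard_univ n i]
  split_ifs with hij
  · simp [hij]
  · rw [← card_filter_mem_and_notMem_powersetCard_univ n hij, ← card_filter_add_card_filter_not
      (s := {T ∈ powersetCard (n + 1) univ | i ∈ T}) (p := fun T => j ∈ T)]
    simp only [filter_filter]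

theorem choose_mul_sum_sq_le_sum_powersetCard_sq (x : ι → ℝ) :
    ((Fintype.card ι - 2).choose n : ℝ) * ∑ i, x i ^ 2 ≤
      ∑ T ∈ powersetCard (n + 1) univ, (∑ i ∈ T, x i) ^ 2 := by
  have hab : ((Fintype.card ι - 2).choose n : ℝ) ≤ (Fintype.card ι - 1).choose n := by
    exact_mod_cast Nat.choose_le_choose n (Nat.sub_le_sub_left (by norm_num) _)
  set a : ℝ := ((Fintype.card ι - 2).choose n : ℝ)
  set b : ℝ := ((Fintype.card ι - 1).choose n : ℝ)
  have hcount : ∀ i j : ι, (#{T ∈ powersetCard (n + 1) univ | i ∈ T ∧ j ∈ T} : ℝ) =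
      (b - a) + if i = j then a else 0 := by
    intro i j
    have := congrArg (Nat.cast (R := ℝ)) (card_filter_mem_and_mem_powersetCard_univ_add n i j)
    push_cast at this
    split_ifs at this ⊢ <;> linarith
  have hexpand : ∑ T ∈ powersetCard (n + 1) univ, (∑ i ∈ T, x i) ^ 2 =
      (b - a) * (∑ i, x i) ^ 2 + a * ∑ i, x i ^ 2 := by
    simp_rw [sum_sq_sum_eq_sum_sum_card_filter_mul, hcount, add_mul, sum_add_distrib, ite_mul,
      zero_mul, sum_ite_eq, mem_univ, if_true, sq, sum_mul_sum, mul_sum]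
  rw [hexpand]
  have := mul_nonneg (sub_nonneg.2 hab) (sq_nonneg (∑ i, x i))
  linarith

end PowersetCard

theorem choose_mul_le_two_mul_mul_choose {k α : ℕ} (hα1 : 1 ≤ α) (hα2 : 2 * α ≤ k) :
    α * k.choose α ≤ 2 * k * (k - 2).choose (α - 1) := by
  obtain ⟨b, rfl⟩ : ∃ b, α = b + 1 := ⟨α - 1, by omega⟩
  obtain ⟨c, rfl⟩ : ∃ c, k = c + 2 := ⟨k - 2, by omega⟩
  have hpascal : (c + 1).choose b ≤ 2 * c.choose b := by
    rcases b with _ | b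
    · simp
    · have : c.choose b ≤ c.choose (b + 1) := Nat.choose_le_succ_of_lt_half_left (by omega)
      rw [Nat.choose_succ_succ']
      omega
  calc (b + 1) * (c + 2).choose (b + 1) = (c + 2) * (c + 1).choose b := by
        rw [Nat.add_one_mul_choose_eq]; ring
    _ ≤ (c + 2) * (2 * c.choose b) := Nat.mul_le_mul_left _ hpascal
    _ = 2 * (c + 2) * (c + 2 - 2).choose (b + 1 - 1) := by simp only [add_tsub_cancel_right]; ring

theorem dotProduct_self_le_card_mul_sq {ι : Type*} [Fintype ι] {ε : ℝ} (d : ι → ℝ)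
    (hd : ∀ i, |d i| ≤ ε) : d ⬝ᵥ d ≤ Fintype.card ι * ε ^ 2 := by
  calc d ⬝ᵥ d = ∑ i, |d i| ^ 2 := by simp [dotProduct, sq]
    _ ≤ ∑ _i : ι, ε ^ 2 := sum_le_sum fun i _ => pow_le_pow_left₀ (abs_nonneg _) (hd i) 2
    _ = Fintype.card ι * ε ^ 2 := by simp

namespace Matrix

variable {m n : Type*} [Fintype m] [Fintype n] (A : Matrix m n ℝ)

/-- Pythagoras for the residual `d - Aθ`, which the normal equations make orthogonal to `Aθ`. -/
theorem dotProduct_self_mulVec_le_of_transpose_mul_self_mulVec_eq {θ : n → ℝ} {d : m → ℝ}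
    (hθ : (Aᵀ * A) *ᵥ θ = Aᵀ *ᵥ d) : (A *ᵥ θ) ⬝ᵥ (A *ᵥ θ) ≤ d ⬝ᵥ d := by
  have hfit : (A *ᵥ θ) ⬝ᵥ (A *ᵥ θ) = (A *ᵥ θ) ⬝ᵥ d := by
    have := congrArg (θ ⬝ᵥ ·) hθ
    simpa only [← mulVec_mulVec, dotProduct_mulVec, vecMul_transpose] using this
  have hres := dotProduct_self_star_nonneg (d - A *ᵥ θ)
  simp only [star_trivial, sub_dotProduct, dotProduct_sub, dotProduct_comm d] at hres
  linarith

theorem injective_mulVec_of_mul_dotProduct_self_le {c : ℝ} (hc : 0 < c)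
    (hA : ∀ x, c * (x ⬝ᵥ x) ≤ (A *ᵥ x) ⬝ᵥ (A *ᵥ x)) : Function.Injective A.mulVec := by
  intro x y hxy
  have h := hA (x - y)
  rw [mulVec_sub, hxy, sub_self, dotProduct_zero] at h
  have hnonneg := dotProduct_self_star_nonneg (x - y)
  rw [star_trivial] at hnonneg
  exact sub_eq_zero.1 (dotProduct_self_eq_zero.1 (by nlinarith))

theorem mul_dotProduct_self_leastSquares_le [DecidableEq n] {c : ℝ} (hc : 0 < c)
    (hA : ∀ x, c * (x ⬝ᵥ x) ≤ (A *ᵥ x) ⬝ᵥ (A *ᵥ x)) (d : m → ℝ) :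
    c * (((Aᵀ * A)⁻¹ *ᵥ (Aᵀ *ᵥ d)) ⬝ᵥ ((Aᵀ * A)⁻¹ *ᵥ (Aᵀ *ᵥ d))) ≤ d ⬝ᵥ d := by
  have hunit : IsUnit (Aᵀ * A).det := by
    have := (PosDef.conjTranspose_mul_self A (injective_mulVec_of_mul_dotProduct_self_le A hc hA))
    rw [conjTranspose_eq_transpose_of_trivial] at this
    exact (isUnit_iff_isUnit_det _).1 this.isUnit
  have hnormal : (Aᵀ * A) *ᵥ ((Aᵀ * A)⁻¹ *ᵥ (Aᵀ *ᵥ d)) = Aᵀ *ᵥ d := by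
    rw [mulVec_mulVec, mul_nonsing_inv _ hunit, one_mulVec]
  exact (hA _).trans (dotProduct_self_mulVec_le_of_transpose_mul_self_mulVec_eq A hnormal)

end Matrix

theorem bigI_mulVec_apply {k α : ℕ} (x : Fin k → ℝ) (T : {S : Finset (Fin k) // S.card = α}) :
    (bigI k α *ᵥ x) T = ∑ i ∈ T.1, x i := by
  simp [bigI, mulVec, dotProduct]

theorem choose_mul_dotProduct_self_le_bigI {k α : ℕ} (hα : 1 ≤ α) (x : Fin k → ℝ) :
    ((k - 2).choose (α - 1) : ℝ) * (x ⬝ᵥ x) ≤ (bigI k α *ᵥ x) ⬝ᵥ (bigI k α *ᵥ x) := by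
  obtain ⟨n, rfl⟩ : ∃ n, α = n + 1 := ⟨α - 1, by omega⟩
  have hrhs : (bigI k (n + 1) *ᵥ x) ⬝ᵥ (bigI k (n + 1) *ᵥ x) =
      ∑ T ∈ powersetCard (n + 1) univ, (∑ i ∈ T, x i) ^ 2 := by
    rw [sum_subtype (F := inferInstance) (powersetCard (n + 1) univ)
      (fun _ => mem_powersetCard_univ)]
    simp [dotProduct, bigI_mulVec_apply, sq]
  rw [hrhs]
  simpa [dotProduct, sq] using choose_mul_sum_sq_le_sum_powersetCard_sq n x

theorem thetaBar_sub (k α : ℕ) (f g : {S : Finset (Fin k) // S.card = α} → ℝ) :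
    thetaBar k α f - thetaBar k α g = thetaBar k α (f - g) := by
  simp only [thetaBar, mulVec_sub]

theorem stmt_10_general (k α : ℕ) (hα1 : 1 ≤ α) (hα2 : 2 * α ≤ k) (ε : ℝ)
    (f g : {S : Finset (Fin k) // S.card = α} → ℝ)
    (hfg : ∀ T, |f T - g T| ≤ ε) :
    euclNorm (thetaBar k α f - thetaBar k α g) ≤ ε * Real.sqrt (2 * (k : ℝ) / α) := by
  set θ := thetaBar k α (f - g)
  have ha : (0 : ℝ) < (k - 2).choose (α - 1) := by exact_mod_cast Nat.choose_pos (by omega)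
  have hα : (0 : ℝ) < α := by exact_mod_cast hα1
  obtain ⟨T, hT⟩ : (powersetCard α (univ : Finset (Fin k))).Nonempty :=
    powersetCard_nonempty.2 (by rw [card_univ, Fintype.card_fin]; omega)
  have hε : 0 ≤ ε := (abs_nonneg _).trans (hfg ⟨T, mem_powersetCard_univ.1 hT⟩)
  have hθ : ((k - 2).choose (α - 1) : ℝ) * (θ ⬝ᵥ θ) ≤ (f - g) ⬝ᵥ (f - g) :=
    mul_dotProduct_self_leastSquares_le _ ha (choose_mul_dotProduct_self_le_bigI hα1) _
  have hd : (f - g) ⬝ᵥ (f - g) ≤ k.choose α * ε ^ 2 := by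
    simpa using dotProduct_self_le_card_mul_sq (f - g) hfg
  have hchoose : (α : ℝ) * k.choose α ≤ 2 * k * (k - 2).choose (α - 1) := by
    exact_mod_cast choose_mul_le_two_mul_mul_choose hα1 hα2
  have hθ_sq : θ ⬝ᵥ θ ≤ 2 * k / α * ε ^ 2 := by
    rw [div_mul_eq_mul_div, le_div_iff₀ hα]
    nlinarith [mul_le_mul_of_nonneg_left hchoose (sq_nonneg ε)]
  rw [thetaBar_sub, euclNorm, Real.sqrt_le_left (by positivity), mul_pow,
    Real.sq_sqrt (by positivity)]
  simpa [dotProduct, sq, mul_comm] using hθ_sq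

theorem stmt_10 (k α : ℕ) (hk : 2 ≤ k) (hα1 : 1 ≤ α) (hα2 : 2 * α ≤ k) (ε : ℝ)
    (f g : {S : Finset (Fin k) // S.card = α} → ℝ)
    (hfg : ∀ T, |f T - g T| ≤ ε) :
    euclNorm (thetaBar k α f - thetaBar k α g) ≤ ε * Real.sqrt (2 * (k : ℝ) / α) :=
  stmt_10_general k α hα1 hα2 ε f g hfg
end

section
/- (Deterministic core of Lemma 3 of the paper.) Let k ≥ 2 and 1 ≤ α ≤ k−1 be integers, C > 0, let S_1,…,S_n be subsets of {1,…,k} of cardinality α, and let f be a function on these subsets with |f(S_i)| ≤ C for all i. Let Z = I_nᵀ I_n / n, let v ∈ ℝ^k have coordinates v_j = Σ_{i : j ∈ S_i} f(S_i), and let M be the second-moment matrix of a uniformly random size-α subset of {1,…,k}. If ‖Z − M‖₂ < λmin(M), then Z is invertible, and the least-squares coefficients θ̂ = Z^{-1} (v/n) satisfy, for all i ≠ j, | (θ̂_i − θ̂_j) − (k(k−1)/(α(k−α))) · (v_i − v_j)/n | ≤ √2 · C α · ‖Z − M‖₂ / ( λmin(M) ( λmin(M) − ‖Z − M‖₂ )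 ). -/
/-!
The second-moment matrix is `M = a • 1 + b • J` with `a = α (k - α) / (k (k - 1))`, `b ≥ 0` and
`J` the all-ones matrix. Hence `⟪x, M x⟫ ≥ a ‖x‖²`, with equality on `e_i - e_j`, so
`λmin(M) = a`, and `M` scales every difference of coordinates by `a`:
`(M⁻¹ w)_i - (M⁻¹ w)_j = (w_i - w_j) / a`. With `ε = ‖Z - M‖ < a`, `Z` stays coercive with
constant `a - ε`, hence invertible, and `Z⁻¹ - M⁻¹ = Z⁻¹ (M - Z) M⁻¹` gives
`‖Z⁻¹ w - M⁻¹ w‖ ≤ ε ‖w‖ / (a (a - ε))`. It remains to use `|x_i - x_j| ≤ √2 ‖x‖` and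
`‖v / n‖ ≤ C √α ≤ C α`.
-/

open Finset Matrix

/-- The 0/1 characteristic vector of a subset `S ⊆ {1,…,k}`, as a vector in `ℝ^k`. -/
def charVec (k : ℕ) (S : Finset (Fin k)) : Fin k → ℝ := fun i => if i ∈ S then 1 else 0

/-- The second-moment matrix `M = E[1_T 1_Tᵀ]` of a uniformly random subset `T ⊆ {1,…,k}`
of cardinality `α`. -/
noncomputable def secondMoment (k α : ℕ) : Matrix (Fin k) (Fin k) ℝ :=
  ((Finset.powersetCard α (univ : Finset (Fin k))).card : ℝ)⁻¹ •
    ∑ T ∈ Finset.powersetCard α (univ : Finset (Fin k)),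
      vecMulVec (charVec k T) (charVec k T)

/-- The spectral norm (operator norm w.r.t. the Euclidean norm) of a square real matrix. -/
noncomputable def specNorm {k : ℕ} (A : Matrix (Fin k) (Fin k) ℝ) : ℝ :=
  ‖Matrix.toEuclideanCLM (𝕜 := ℝ) A‖

/-- The smallest eigenvalue of a square real matrix, as the infimum of its spectrum. -/
noncomputable def lamMin {k : ℕ} (A : Matrix (Fin k) (Fin k) ℝ) : ℝ :=
  sInf (spectrum ℝ A)

/-- The matrix `I_n ∈ {0,1}^{n×k}` whose `i`-th row is the characteristic vector `1_{S_i}`. -/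
def sampMatrix {k n : ℕ} (σ : Fin n → Finset (Fin k)) : Matrix (Fin n) (Fin k) ℝ :=
  Matrix.of fun i j => if j ∈ σ i then 1 else 0

section Euclidean

variable {ι : Type*} [Fintype ι]

lemma dotProduct_self_eq_norm_sq (x : ι → ℝ) : x ⬝ᵥ x = ‖WithLp.toLp 2 x‖ ^ 2 := by
  rw [EuclideanSpace.real_norm_sq_eq]
  simp [dotProduct, sq]

lemma abs_dotProduct_le_norm_mul_norm (x y : ι → ℝ) :
    |x ⬝ᵥ y| ≤ ‖WithLp.toLp 2 x‖ * ‖WithLp.toLp 2 y‖ := by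
  have h := abs_real_inner_le_norm (WithLp.toLp 2 x) (WithLp.toLp 2 y)
  rwa [EuclideanSpace.inner_eq_star_dotProduct, star_trivial, dotProduct_comm] at h

lemma norm_toLp_mulVec_le [DecidableEq ι] (A : Matrix ι ι ℝ) (x : ι → ℝ) :
    ‖WithLp.toLp 2 (A *ᵥ x)‖ ≤ ‖toEuclideanCLM (𝕜 := ℝ) A‖ * ‖WithLp.toLp 2 x‖ := by
  rw [← toEuclideanCLM_toLp]
  exact ContinuousLinearMap.le_opNorm _ _

lemma abs_sub_apply_le_sqrt_two_mul_norm (x : ι → ℝ) (i j : ι) :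
    |x i - x j| ≤ √2 * ‖WithLp.toLp 2 x‖ := by
  classical
  by_cases hij : i = j
  · simp [hij]
  have hpair : x i ^ 2 + x j ^ 2 ≤ ‖WithLp.toLp 2 x‖ ^ 2 := by
    rw [EuclideanSpace.real_norm_sq_eq, ← sum_pair (f := fun l => x l ^ 2) hij]
    exact sum_le_sum_of_subset_of_nonneg (subset_univ _) fun _ _ _ => sq_nonneg _
  rw [← Real.sqrt_sq (norm_nonneg (WithLp.toLp 2 x)), ← Real.sqrt_mul zero_le_two]
  exact Real.abs_le_sqrt (by nlinarith [sq_nonneg (x i + x j)])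

end Euclidean

namespace Matrix

variable {ι : Type*} [Fintype ι]

def IsCoerciveWith (B : Matrix ι ι ℝ) (c : ℝ) : Prop :=
  ∀ x : ι → ℝ, c * (x ⬝ᵥ x) ≤ x ⬝ᵥ (B *ᵥ x)

namespace IsCoerciveWith

variable {A B : Matrix ι ι ℝ} {a c : ℝ}

lemma mul_norm_le_norm_mulVec (hB : B.IsCoerciveWith c) (x : ι → ℝ) :
    c * ‖WithLp.toLp 2 x‖ ≤ ‖WithLp.toLp 2 (B *ᵥ x)‖ := by
  have h := (hB x).trans ((le_abs_self _).trans (abs_dotProduct_le_norm_mul_norm x (B *ᵥ x)))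
  rw [dotProduct_self_eq_norm_sq] at h
  rcases (norm_nonneg (WithLp.toLp 2 x)).eq_or_lt with h0 | hpos
  · rw [← h0, mul_zero]
    exact norm_nonneg _
  · exact le_of_mul_le_mul_left (by linarith) hpos

variable [DecidableEq ι]

lemma isUnit (hB : B.IsCoerciveWith c) (hc : 0 < c) : IsUnit B := by
  refine mulVec_injective_iff_isUnit.1 fun x y hxy => sub_eq_zero.1 ?_
  have h := hB (x - y)
  rw [mulVec_sub, hxy, sub_self, dotProduct_zero] at h
  have hnorm : (x - y) ⬝ᵥ (x - y) = 0 :=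
    le_antisymm (nonpos_of_mul_nonpos_right h hc) (by rw [dotProduct_self_eq_norm_sq]; positivity)
  exact dotProduct_self_eq_zero.1 hnorm

lemma norm_inv_mulVec_le (hB : B.IsCoerciveWith c) (hc : 0 < c) (z : ι → ℝ) :
    ‖WithLp.toLp 2 (B⁻¹ *ᵥ z)‖ ≤ c⁻¹ * ‖WithLp.toLp 2 z‖ := by
  have h := hB.mul_norm_le_norm_mulVec (B⁻¹ *ᵥ z)
  rwa [mulVec_mulVec, mul_nonsing_inv B ((isUnit_iff_isUnit_det B).1 (hB.isUnit hc)),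
    one_mulVec, ← le_inv_mul_iff₀ hc] at h

lemma sub_smul_one (hA : A.IsCoerciveWith a) (μ : ℝ) : (A - μ • 1).IsCoerciveWith (a - μ) := by
  intro x
  rw [sub_mulVec, smul_mulVec, one_mulVec, dotProduct_sub, dotProduct_smul, smul_eq_mul]
  linarith [hA x]

lemma of_opNorm_sub_le (hA : A.IsCoerciveWith a) {ε : ℝ}
    (hε : ‖toEuclideanCLM (𝕜 := ℝ) (B - A)‖ ≤ ε) : B.IsCoerciveWith (a - ε) := by
  intro x
  have hdiff : |x ⬝ᵥ ((B - A) *ᵥ x)| ≤ ε * (x ⬝ᵥ x) := by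
    rw [dotProduct_self_eq_norm_sq]
    calc |x ⬝ᵥ ((B - A) *ᵥ x)| ≤ ‖WithLp.toLp 2 x‖ * ‖WithLp.toLp 2 ((B - A) *ᵥ x)‖ :=
          abs_dotProduct_le_norm_mul_norm _ _
      _ ≤ ‖WithLp.toLp 2 x‖ * (ε * ‖WithLp.toLp 2 x‖) := by
          gcongr
          exact (norm_toLp_mulVec_le _ _).trans (by gcongr)
      _ = ε * ‖WithLp.toLp 2 x‖ ^ 2 := by ring
  rw [sub_mulVec, dotProduct_sub] at hdiff
  linarith [hA x, (abs_le.1 hdiff).1]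

lemma le_of_mem_spectrum (hA : A.IsCoerciveWith a) {μ : ℝ} (hμ : μ ∈ spectrum ℝ A) : a ≤ μ := by
  by_contra! hlt
  refine spectrum.mem_iff.1 hμ ?_
  rw [Algebra.algebraMap_eq_smul_one, ← neg_sub]
  exact ((hA.sub_smul_one μ).isUnit (sub_pos.2 hlt)).neg

lemma norm_inv_mulVec_sub_inv_mulVec_le (hA : A.IsCoerciveWith a) (ha : 0 < a) {ε : ℝ}
    (hε : ‖toEuclideanCLM (𝕜 := ℝ) (B - A)‖ ≤ ε) (hεa : ε < a) (w : ι → ℝ) :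
    ‖WithLp.toLp 2 (B⁻¹ *ᵥ w - A⁻¹ *ᵥ w)‖ ≤ ε / (a * (a - ε)) * ‖WithLp.toLp 2 w‖ := by
  have hgap : 0 < a - ε := sub_pos.2 hεa
  have hB := hA.of_opNorm_sub_le hε
  have hunits : IsUnit B ↔ IsUnit A := iff_of_true (hB.isUnit hgap) (hA.isUnit ha)
  have hid : B⁻¹ *ᵥ w - A⁻¹ *ᵥ w = -(B⁻¹ *ᵥ ((B - A) *ᵥ (A⁻¹ *ᵥ w))) := by
    rw [← sub_mulVec, inv_sub_inv hunits, ← neg_sub B A]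
    simp only [mulVec_mulVec, Matrix.mul_neg, Matrix.neg_mul, neg_mulVec, Matrix.mul_assoc]
  have hε0 : 0 ≤ ε := (norm_nonneg _).trans hε
  rw [hid, WithLp.toLp_neg, norm_neg]
  calc _ ≤ (a - ε)⁻¹ * ‖WithLp.toLp 2 ((B - A) *ᵥ (A⁻¹ *ᵥ w))‖ := hB.norm_inv_mulVec_le hgap _
    _ ≤ (a - ε)⁻¹ * (ε * (a⁻¹ * ‖WithLp.toLp 2 w‖)) := by
        gcongr
        exact (norm_toLp_mulVec_le _ _).trans (by gcongr; exact hA.norm_inv_mulVec_le ha w)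
    _ = ε / (a * (a - ε)) * ‖WithLp.toLp 2 w‖ := by field_simp

end IsCoerciveWith

end Matrix

lemma card_filter_powersetCard_superset_mul_choose {γ : Type*} [DecidableEq γ]
    {u t : Finset γ} (hut : u ⊆ t) (m : ℕ) :
    #{T ∈ t.powersetCard m | u ⊆ T} * (#t).choose #u = (#t).choose m * m.choose #u := by
  by_cases hu : #u ≤ m
  · rw [card_filter_powersetCard_subset u t m hut hu, Nat.choose_mul hu, mul_comm]
  · push Not at hu
    have hempty : {T ∈ t.powersetCard m | u ⊆ T} = ∅ :=
      filter_eq_empty_iff.2 fun T hT huT =>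
        (card_le_card huT).not_gt ((mem_powersetCard.1 hT).2 ▸ hu)
    rw [hempty, Nat.choose_eq_zero_of_lt hu, card_empty, zero_mul, mul_zero]

section SecondMoment

variable {k α : ℕ}

noncomputable def secondMomentMinEig (k α : ℕ) : ℝ := α * (k - α) / (k * (k - 1))

lemma secondMomentMinEig_pos (hα1 : 1 ≤ α) (hαk : α < k) : 0 < secondMomentMinEig k α := by
  have hα : (1 : ℝ) ≤ α := by exact_mod_cast hα1
  have hk : (α : ℝ) + 1 ≤ k := by exact_mod_cast hαk
  unfold secondMomentMinEig
  apply div_pos <;> nlinarith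

lemma secondMoment_apply (hαk : α ≤ k) (i j : Fin k) :
    secondMoment k α i j = (α.choose #{i, j} : ℝ) / (k.choose #{i, j}) := by
  have hcount := card_filter_powersetCard_superset_mul_choose (subset_univ {i, j}) α
  rw [card_univ, Fintype.card_fin] at hcount
  have hN : (k.choose α : ℝ) ≠ 0 := by exact_mod_cast (Nat.choose_pos hαk).ne'
  have hK : (k.choose #{i, j} : ℝ) ≠ 0 := by
    exact_mod_cast (Nat.choose_pos ((card_le_univ _).trans (Fintype.card_fin k).le)).ne'
  have hentry : secondMoment k α i j =
      (k.choose α : ℝ)⁻¹ * #{T ∈ powersetCard α univ | ({i, j} : Finset (Fin k)) ⊆ T} := by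
    rw [secondMoment, Matrix.smul_apply, Matrix.sum_apply, card_powersetCard, card_univ,
      Fintype.card_fin, smul_eq_mul, card_filter, Nat.cast_sum]
    congr 1
    refine sum_congr rfl fun T _ => ?_
    by_cases hi : i ∈ T <;> by_cases hj : j ∈ T <;>
      simp [vecMulVec_apply, charVec, hi, hj, insert_subset_iff]
  rw [hentry, eq_div_iff hK, inv_mul_eq_div, div_mul_eq_mul_div, div_eq_iff hN,
    mul_comm (α.choose _ : ℝ)]
  exact_mod_cast hcount

lemma secondMoment_eq (hk : 2 ≤ k) (hαk : α ≤ k) :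
    secondMoment k α = secondMomentMinEig k α • 1 +
      ((α.choose 2 : ℝ) / k.choose 2) • Matrix.of fun _ _ => 1 := by
  have hk0 : (k : ℝ) ≠ 0 := by positivity
  have hk1 : (k : ℝ) - 1 ≠ 0 := by
    have : (2 : ℝ) ≤ k := by exact_mod_cast hk
    linarith
  ext i j
  rw [secondMoment_apply hαk]
  by_cases hij : i = j
  · subst hij
    simp only [insert_eq_self.2 (mem_singleton_self i), card_singleton, Nat.choose_one_right,
      Matrix.add_apply, Matrix.smul_apply, one_apply_eq, of_apply, smul_eq_mul, mul_one,
      Nat.cast_choose_two, secondMomentMinEig]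
    field_simp
    ring
  · simp [card_pair hij, hij, secondMomentMinEig]

lemma secondMoment_mulVec (hk : 2 ≤ k) (hαk : α ≤ k) (x : Fin k → ℝ) :
    secondMoment k α *ᵥ x =
      secondMomentMinEig k α • x + ((α.choose 2 : ℝ) / k.choose 2 * ∑ j, x j) • fun _ => 1 := by
  rw [secondMoment_eq hk hαk, add_mulVec, smul_mulVec, smul_mulVec, one_mulVec]
  ext i
  simp [mulVec, dotProduct]

lemma isCoerciveWith_secondMoment (hk : 2 ≤ k) (hαk : α ≤ k) :
    (secondMoment k α).IsCoerciveWith (secondMomentMinEig k α) := by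
  intro x
  have hb : 0 ≤ (α.choose 2 : ℝ) / k.choose 2 := by positivity
  have hsum : x ⬝ᵥ (fun _ => 1) = ∑ j, x j := by simp [dotProduct]
  rw [secondMoment_mulVec hk hαk, dotProduct_add, dotProduct_smul, dotProduct_smul, hsum,
    smul_eq_mul, smul_eq_mul]
  nlinarith [sq_nonneg (∑ j, x j)]

lemma secondMoment_mulVec_sub_mulVec (hk : 2 ≤ k) (hαk : α ≤ k) (x : Fin k → ℝ) (i j : Fin k) :
    (secondMoment k α *ᵥ x) i - (secondMoment k α *ᵥ x) j =
      secondMomentMinEig k α * (x i - x j) := by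
  simp only [secondMoment_mulVec hk hαk, Pi.add_apply, Pi.smul_apply, smul_eq_mul]
  ring

lemma secondMoment_inv_mulVec_sub_inv_mulVec (hk : 2 ≤ k) (hα1 : 1 ≤ α) (hαk : α < k)
    (w : Fin k → ℝ) (i j : Fin k) :
    ((secondMoment k α)⁻¹ *ᵥ w) i - ((secondMoment k α)⁻¹ *ᵥ w) j =
      (secondMomentMinEig k α)⁻¹ * (w i - w j) := by
  have ha := secondMomentMinEig_pos hα1 hαk
  have hunit := (isCoerciveWith_secondMoment hk hαk.le).isUnit ha
  have h := secondMoment_mulVec_sub_mulVec hk hαk.le ((secondMoment k α)⁻¹ *ᵥ w) i j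
  rw [mulVec_mulVec, mul_nonsing_inv _ ((isUnit_iff_isUnit_det _).1 hunit), one_mulVec] at h
  rw [h, inv_mul_cancel_left₀ ha.ne']

lemma secondMomentMinEig_mem_spectrum (hk : 2 ≤ k) (hαk : α ≤ k) :
    secondMomentMinEig k α ∈ spectrum ℝ (secondMoment k α) := by
  set u : Fin k → ℝ := Pi.single ⟨0, by omega⟩ 1 - Pi.single ⟨1, by omega⟩ 1
  have hu : u ≠ 0 := fun h => by simpa [u, Pi.single_apply, Fin.ext_iff] using congrFun h ⟨0, by omega⟩
  have hsum : ∑ j, u j = 0 := by simp [u]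
  rw [spectrum.mem_iff, ← mulVec_injective_iff_isUnit]
  refine fun hinj => hu (hinj ?_)
  rw [mulVec_zero, Algebra.algebraMap_eq_smul_one, sub_mulVec, smul_mulVec, one_mulVec,
    secondMoment_mulVec hk hαk, hsum, mul_zero, zero_smul, add_zero, sub_self]

lemma lamMin_secondMoment (hk : 2 ≤ k) (hαk : α ≤ k) :
    lamMin (secondMoment k α) = secondMomentMinEig k α :=
  IsLeast.csInf_eq ⟨secondMomentMinEig_mem_spectrum hk hαk,
    fun _ => (isCoerciveWith_secondMoment hk hαk).le_of_mem_spectrum⟩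

end SecondMoment

lemma norm_toLp_charVec (k : ℕ) (T : Finset (Fin k)) :
    ‖WithLp.toLp 2 (charVec k T)‖ = √(#T : ℝ) := by
  rw [EuclideanSpace.norm_eq]
  congr 1
  simp [charVec, apply_ite]

lemma sampMatrix_transpose_mulVec {k n : ℕ} (S : Fin n → Finset (Fin k)) (g : Fin n → ℝ) :
    (sampMatrix S)ᵀ *ᵥ g = ∑ i, g i • charVec k (S i) := by
  ext j
  simp [sampMatrix, charVec, mulVec, dotProduct, mul_comm]

lemma norm_toLp_sampMatrix_transpose_mulVec_le {k n α : ℕ} {S : Fin n → Finset (Fin k)}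
    (hcard : ∀ i, #(S i) = α) {g : Fin n → ℝ} {C : ℝ} (hg : ∀ i, |g i| ≤ C) :
    ‖WithLp.toLp 2 ((sampMatrix S)ᵀ *ᵥ g)‖ ≤ n * (C * √(α : ℝ)) := by
  rw [sampMatrix_transpose_mulVec, WithLp.toLp_sum]
  calc _ ≤ ∑ i, ‖WithLp.toLp 2 (g i • charVec k (S i))‖ := norm_sum_le _ _
    _ ≤ ∑ _i : Fin n, C * √(α : ℝ) := by
        refine sum_le_sum fun i _ => ?_
        rw [WithLp.toLp_smul, norm_smul, norm_toLp_charVec, hcard, Real.norm_eq_abs]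
        gcongr
        exact hg i
    _ = n * (C * √(α : ℝ)) := by simp

lemma norm_toLp_inv_smul_sampMatrix_transpose_mulVec_le {k n α : ℕ}
    {S : Fin n → Finset (Fin k)} (hcard : ∀ i, #(S i) = α) {g : Fin n → ℝ} {C : ℝ} (hC : 0 ≤ C)
    (hg : ∀ i, |g i| ≤ C) :
    ‖WithLp.toLp 2 ((n : ℝ)⁻¹ • ((sampMatrix S)ᵀ *ᵥ g))‖ ≤ C * √(α : ℝ) := by
  rw [WithLp.toLp_smul, norm_smul, norm_inv, Real.norm_natCast]
  calc _ ≤ (n : ℝ)⁻¹ * n * (C * √(α : ℝ)) := by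
        rw [mul_assoc]
        gcongr
        exact norm_toLp_sampMatrix_transpose_mulVec_le hcard hg
    _ ≤ C * √(α : ℝ) := mul_le_of_le_one_left (by positivity) inv_mul_le_one

theorem stmt_13_general (k α n : ℕ) (hk : 2 ≤ k) (hα1 : 1 ≤ α) (hαk : α ≤ k - 1)
    (C : ℝ) (hC : 0 < C)
    (S : Fin n → Finset (Fin k)) (hcard : ∀ i, (S i).card = α)
    (f : Finset (Fin k) → ℝ) (hf : ∀ i, |f (S i)| ≤ C)
    (Z : Matrix (Fin k) (Fin k) ℝ)
    (v : Fin k → ℝ) (hv : v = (sampMatrix S)ᵀ *ᵥ fun i => f (S i))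
    (hdev : specNorm (Z - secondMoment k α) < lamMin (secondMoment k α)) :
    IsUnit Z ∧
    ∀ i j : Fin k, i ≠ j →
      |((Z⁻¹ *ᵥ ((n : ℝ)⁻¹ • v)) i - (Z⁻¹ *ᵥ ((n : ℝ)⁻¹ • v)) j) -
          ((k : ℝ) * ((k : ℝ) - 1) / ((α : ℝ) * ((k : ℝ) - (α : ℝ)))) *
            ((v i - v j) / n)| ≤
        Real.sqrt 2 * C * (α : ℝ) * specNorm (Z - secondMoment k α) /
          (lamMin (secondMoment k α) *
            (lamMin (secondMoment k α) - specNorm (Z - secondMoment k α))) := by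
  have hαk' : α < k := by omega
  rw [lamMin_secondMoment hk hαk'.le] at hdev ⊢
  set M := secondMoment k α
  set a := secondMomentMinEig k α
  set ε := specNorm (Z - M)
  set w : Fin k → ℝ := (n : ℝ)⁻¹ • v
  have ha : 0 < a := secondMomentMinEig_pos hα1 hαk'
  have hM : M.IsCoerciveWith a := isCoerciveWith_secondMoment hk hαk'.le
  refine ⟨(hM.of_opNorm_sub_le le_rfl).isUnit (sub_pos.2 hdev), fun i j _ => ?_⟩
  have hw : ‖WithLp.toLp 2 w‖ ≤ C * α :=
    (hv ▸ norm_toLp_inv_smul_sampMatrix_transpose_mulVec_le hcard hC.le hf).trans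
      (mul_le_mul_of_nonneg_left (Real.sqrt_le_self_iff.2 (Or.inr (by exact_mod_cast hα1))) hC.le)
  have hMw : (M⁻¹ *ᵥ w) i - (M⁻¹ *ᵥ w) j = a⁻¹ * (w i - w j) :=
    secondMoment_inv_mulVec_sub_inv_mulVec hk hα1 hαk' w i j
  have hcoef : (k : ℝ) * ((k : ℝ) - 1) / ((α : ℝ) * ((k : ℝ) - (α : ℝ))) * ((v i - v j) / n) =
      a⁻¹ * (w i - w j) := by
    simp only [a, secondMomentMinEig, inv_div, w, Pi.smul_apply, smul_eq_mul]
    ring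
  calc _ = |(Z⁻¹ *ᵥ w - M⁻¹ *ᵥ w) i - (Z⁻¹ *ᵥ w - M⁻¹ *ᵥ w) j| := by
        rw [hcoef, ← hMw, Pi.sub_apply, Pi.sub_apply]
        congr 1
        ring
    _ ≤ √2 * ‖WithLp.toLp 2 (Z⁻¹ *ᵥ w - M⁻¹ *ᵥ w)‖ := abs_sub_apply_le_sqrt_two_mul_norm _ i j
    _ ≤ √2 * (ε / (a * (a - ε)) * (C * α)) := by
        refine mul_le_mul_of_nonneg_left ?_ (Real.sqrt_nonneg 2)
        refine (hM.norm_inv_mulVec_sub_inv_mulVec_le ha (ε := ε) le_rfl hdev w).trans ?_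
        exact mul_le_mul_of_nonneg_left hw
          (div_nonneg (norm_nonneg _) (mul_pos ha (sub_pos.2 hdev)).le)
    _ = √2 * C * α * ε / (a * (a - ε)) := by ring

theorem stmt_13 (k α n : ℕ) (hk : 2 ≤ k) (hα1 : 1 ≤ α) (hαk : α ≤ k - 1)
    (C : ℝ) (hC : 0 < C)
    (S : Fin n → Finset (Fin k)) (hcard : ∀ i, (S i).card = α)
    (f : Finset (Fin k) → ℝ) (hf : ∀ i, |f (S i)| ≤ C)
    (Z : Matrix (Fin k) (Fin k) ℝ) (hZ : Z = (n : ℝ)⁻¹ • ((sampMatrix S)ᵀ * sampMatrix S))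
    (v : Fin k → ℝ) (hv : v = (sampMatrix S)ᵀ *ᵥ fun i => f (S i))
    (hdev : specNorm (Z - secondMoment k α) < lamMin (secondMoment k α)) :
    IsUnit Z ∧
    ∀ i j : Fin k, i ≠ j →
      |((Z⁻¹ *ᵥ ((n : ℝ)⁻¹ • v)) i - (Z⁻¹ *ᵥ ((n : ℝ)⁻¹ • v)) j) -
          ((k : ℝ) * ((k : ℝ) - 1) / ((α : ℝ) * ((k : ℝ) - (α : ℝ)))) *
            ((v i - v j) / n)| ≤
        Real.sqrt 2 * C * (α : ℝ) * specNorm (Z - secondMoment k α) /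
          (lamMin (secondMoment k α) *
            (lamMin (secondMoment k α) - specNorm (Z - secondMoment k α))) :=
  stmt_13_general k α n hk hα1 hαk C hC S hcard f hf Z v hv hdev
end
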